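/- Second-order accuracy of the first family of adaptive rational weights: let α ≥ 0 and let f be twice continuously differentiable on a compact interval I ⊆ ℝ. There exist constants M > 0 and h₀ > 0 such that for every 0 < h < h₀, every x₀ ∈ ℝ, and every integer j with [x_{j−2}, x_{j+1}] ⊆ I, one has |ω_{1,0}·f(x_{j−1}) + ω_{1,1}·f(x_j) − f(x_{j-1/2})| ≤ M·h², where ω_{1,0} = (1 + α·(f(x_{j−1}) − f(x_{j+1}))²) / (2 + α·((f(x_{j−2}) − f(x_j))² + (f(x_{j−1}) − f(x_{j+1}))²)) and ω_{1,1} = (1 + α·(f(x_{j−2}) − f(x_j))²) / (2 + α·((f(x_{j−2}) − f(x_j))² + (f(x_{j−1}) − f(x_{j+1}))²)). -/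

import Mathlib

/-- The node `x_m = x₀ + m·h`. -/
noncomputable def nd (h x₀ : ℝ) (m : ℤ) : ℝ := x₀ + (m : ℝ) * h

open Set

lemma taylor_aux {A B : ℝ} (hAB : A < B) {f : ℝ → ℝ}
    (hf : ContDiffOn ℝ 2 f (Set.Icc A B)) :
    ∃ C₁ ≥ (0:ℝ), ∃ C₂ ≥ (0:ℝ),
      (∀ x ∈ Set.Icc A B, ∀ y ∈ Set.Icc A B, |f x - f y| ≤ C₁ * |x - y|) ∧
      (∀ x ∈ Set.Icc A B, ∀ y ∈ Set.Icc A B,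
        |f x + f y - 2 * f ((x + y) / 2)| ≤ 2 * C₂ * ((x - y) / 2) ^ 2) := by
  have hK : UniqueDiffOn ℝ (Set.Icc A B) := uniqueDiffOn_Icc hAB
  have hcpt : IsCompact (Set.Icc A B) := isCompact_Icc
  set f' := derivWithin f (Set.Icc A B) with hf'def
  have hf1 : ContDiffOn ℝ 1 f' (Set.Icc A B) := hf.derivWithin hK (by norm_num)
  have hfd : DifferentiableOn ℝ f (Set.Icc A B) := hf.differentiableOn (by norm_num)
  have hf'd : DifferentiableOn ℝ f' (Set.Icc A B) := hf1.differentiableOn (by norm_num)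
  obtain ⟨C₁, hC₁⟩ := hcpt.exists_bound_of_continuousOn hf1.continuousOn
  obtain ⟨C₂, hC₂⟩ := hcpt.exists_bound_of_continuousOn
    (hf1.continuousOn_derivWithin hK le_rfl)
  refine ⟨max C₁ 0, le_max_right _ _, max C₂ 0, le_max_right _ _, ?_, ?_⟩
  · -- Lipschitz bound for f
    intro x hx y hy
    have h9 : ‖f x - f y‖ ≤ max C₁ 0 * ‖x - y‖ :=
      Convex.norm_image_sub_le_of_norm_derivWithin_le hfd
        (fun z hz => le_trans (hC₁ z hz) (le_max_left _ _)) (convex_Icc A B) hy hx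
    simpa [Real.norm_eq_abs] using h9
  · -- second order bound
    have hlip' : ∀ x ∈ Set.Icc A B, ∀ y ∈ Set.Icc A B,
        |f' x - f' y| ≤ max C₂ 0 * |x - y| := by
      intro x hx y hy
      have h9 : ‖f' x - f' y‖ ≤ max C₂ 0 * ‖x - y‖ :=
        Convex.norm_image_sub_le_of_norm_derivWithin_le hf'd
          (fun z hz => le_trans (hC₂ z hz) (le_max_left _ _)) (convex_Icc A B) hy hx
      simpa [Real.norm_eq_abs] using h9
    have hquad : ∀ m ∈ Set.Icc A B, ∀ z ∈ Set.Icc A B,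
        |f z - f m - f' m * (z - m)| ≤ max C₂ 0 * (z - m) ^ 2 := by
      intro m hm z hz
      rcases eq_or_ne z m with rfl | hne
      · simp
      set s := Set.Icc (min m z) (max m z) with hsdef
      have hms : m ∈ s := ⟨min_le_left _ _, le_max_left _ _⟩
      have hzs : z ∈ s := ⟨min_le_right _ _, le_max_right _ _⟩
      have hsub : s ⊆ Set.Icc A B := by
        intro y hy
        rcases le_total m z with hmz | hmz
        · rw [hsdef, min_eq_left hmz, max_eq_right hmz] at hy
          exact ⟨le_trans hm.1 hy.1, le_trans hy.2 hz.2⟩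
        · rw [hsdef, min_eq_right hmz, max_eq_left hmz] at hy
          exact ⟨le_trans hz.1 hy.1, le_trans hy.2 hm.2⟩
      have hUs : UniqueDiffOn ℝ s := uniqueDiffOn_Icc (min_lt_max.mpr (Ne.symm hne))
      set g : ℝ → ℝ := fun y => f y - f' m * y with hgdef
      have hgderiv : ∀ y ∈ s, HasDerivWithinAt g (f' y - f' m) s y := by
        intro y hy
        have h1 : HasDerivWithinAt f (f' y) s y :=
          ((hfd y (hsub hy)).hasDerivWithinAt).mono hsub
        have h2 : HasDerivWithinAt (fun y => f' m * y) (f' m * 1) s y :=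
          (hasDerivWithinAt_id y s).const_mul (f' m)
        exact (h1.sub h2).congr_deriv (by ring)
      have hgd : DifferentiableOn ℝ g s :=
        fun y hy => (hgderiv y hy).differentiableWithinAt
      have hbound : ∀ y ∈ s, ‖derivWithin g s y‖ ≤ max C₂ 0 * |z - m| := by
        intro y hy
        rw [(hgderiv y hy).derivWithin (hUs y hy)]
        have h5 : |y - m| ≤ |z - m| := by
          obtain ⟨hymin, hymax⟩ := hy
          rcases le_total m z with hmz | hmz
          · rw [min_eq_left hmz] at hymin; rw [max_eq_right hmz] at hymax
            rw [abs_of_nonneg (by linarith), abs_of_nonneg (by linarith)]; linarith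
          · rw [min_eq_right hmz] at hymin; rw [max_eq_left hmz] at hymax
            rw [abs_of_nonpos (by linarith), abs_of_nonpos (by linarith)]; linarith
        calc ‖f' y - f' m‖ = |f' y - f' m| := rfl
          _ ≤ max C₂ 0 * |y - m| := hlip' y (hsub hy) m hm
          _ ≤ max C₂ 0 * |z - m| := by
              apply mul_le_mul_of_nonneg_left h5 (le_max_right _ _)
      have hmvt := Convex.norm_image_sub_le_of_norm_derivWithin_le hgd hbound
        (convex_Icc _ _) hms hzs
      have hgz : g z - g m = f z - f m - f' m * (z - m) := by rw [hgdef]; ring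
      calc |f z - f m - f' m * (z - m)| = ‖g z - g m‖ := by rw [hgz, Real.norm_eq_abs]
        _ ≤ max C₂ 0 * |z - m| * ‖z - m‖ := hmvt
        _ = max C₂ 0 * (z - m) ^ 2 := by
            rw [Real.norm_eq_abs]; rw [mul_assoc, ← abs_mul]
            rw [abs_of_nonneg (mul_self_nonneg _)]; ring
    intro x hx y hy
    have hmK : (x + y) / 2 ∈ Set.Icc A B :=
      ⟨by linarith [hx.1, hy.1], by linarith [hx.2, hy.2]⟩
    have h1 := hquad ((x + y) / 2) hmK x hx
    have h2 := hquad ((x + y) / 2) hmK y hy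
    have e1 : x - (x + y) / 2 = (x - y) / 2 := by ring
    have e2 : y - (x + y) / 2 = -((x - y) / 2) := by ring
    rw [e1] at h1; rw [e2] at h2
    have key : f x + f y - 2 * f ((x + y) / 2) =
        (f x - f ((x + y) / 2) - f' ((x + y) / 2) * ((x - y) / 2)) +
        (f y - f ((x + y) / 2) - f' ((x + y) / 2) * (-((x - y) / 2))) := by ring
    rw [key]
    calc |_ + _| ≤ _ + _ := abs_add_le _ _
      _ ≤ max C₂ 0 * ((x - y) / 2) ^ 2 + max C₂ 0 * (-((x - y) / 2)) ^ 2 :=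
          add_le_add h1 h2
      _ = 2 * max C₂ 0 * ((x - y) / 2) ^ 2 := by ring

set_option maxHeartbeats 1600000 in
/-- Second-order accuracy of the first family of adaptive rational weights `ω_{1,0}, ω_{1,1}`. -/
theorem rational_weights_first_family_order_two (α : ℝ) (hα : 0 ≤ α) (A B : ℝ) (f : ℝ → ℝ)
    (hf : ContDiffOn ℝ 2 f (Set.Icc A B)) :
    ∃ M > 0, ∃ h₀ > 0, ∀ h : ℝ, 0 < h → h < h₀ → ∀ x₀ : ℝ, ∀ j : ℤ,
      Set.Icc (nd h x₀ (j - 2)) (nd h x₀ (j + 1)) ⊆ Set.Icc A B →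
      |((1 + α * (f (nd h x₀ (j - 1)) - f (nd h x₀ (j + 1))) ^ 2) /
            (2 + α * ((f (nd h x₀ (j - 2)) - f (nd h x₀ j)) ^ 2 +
              (f (nd h x₀ (j - 1)) - f (nd h x₀ (j + 1))) ^ 2))) * f (nd h x₀ (j - 1)) +
          ((1 + α * (f (nd h x₀ (j - 2)) - f (nd h x₀ j)) ^ 2) /
            (2 + α * ((f (nd h x₀ (j - 2)) - f (nd h x₀ j)) ^ 2 +
              (f (nd h x₀ (j - 1)) - f (nd h x₀ (j + 1))) ^ 2))) * f (nd h x₀ j) -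
          f (x₀ + ((j : ℝ) - 1 / 2) * h)| ≤ M * h ^ 2 := by
  by_cases hAB : A < B
  · obtain ⟨C₁, hC₁0, C₂, hC₂0, hlip, hquad⟩ := taylor_aux hAB hf
    refine ⟨C₂ + 2 * α * C₁ ^ 3 + 1, by positivity, 1, one_pos, ?_⟩
    intro h hh hh1 x₀ j hsub
    have hnode : ∀ k : ℤ, j - 2 ≤ k → k ≤ j + 1 → nd h x₀ k ∈ Set.Icc A B := by
      intro k hk1 hk2
      have h1 : ((j:ℝ) - 2) ≤ (k:ℝ) := by exact_mod_cast hk1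
      have h2 : (k:ℝ) ≤ (j:ℝ) + 1 := by exact_mod_cast hk2
      apply hsub
      simp only [nd, Set.mem_Icc]
      push_cast
      constructor <;> nlinarith
    have hm1 : nd h x₀ (j-1) ∈ Set.Icc A B := hnode _ (by omega) (by omega)
    have hm2 : nd h x₀ j ∈ Set.Icc A B := hnode _ (by omega) (by omega)
    have hm0 : nd h x₀ (j-2) ∈ Set.Icc A B := hnode _ (by omega) (by omega)
    have hm3 : nd h x₀ (j+1) ∈ Set.Icc A B := hnode _ (by omega) (by omega)
    have hmid : x₀ + ((j:ℝ) - 1/2) * h = (nd h x₀ (j-1) + nd h x₀ j) / 2 := by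
      simp only [nd]; push_cast; ring
    set a := f (nd h x₀ (j-1)) with ha
    set b := f (nd h x₀ j) with hb
    set c1 := f (nd h x₀ (j-2)) with hc1
    set c4 := f (nd h x₀ (j+1)) with hc4
    set fm := f (x₀ + ((j:ℝ) - 1/2) * h) with hfm
    set P := (a - c4) ^ 2 with hP
    set Q := (c1 - b) ^ 2 with hQ
    set D := 2 + α * (Q + P) with hD
    have hQP0 : 0 ≤ α * (Q + P) :=
      mul_nonneg hα (add_nonneg (sq_nonneg _) (sq_nonneg _))
    have hD2 : (2:ℝ) ≤ D := by rw [hD]; linarith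
    have hDne : D ≠ 0 := by linarith
    have hid : (1 + α * P) / D * a + (1 + α * Q) / D * b - fm =
        (a + b - 2 * fm) / 2 + α * (P - Q) * (a - b) / (2 * D) := by
      field_simp
      ring
    -- bounds
    have hd1 : nd h x₀ (j-1) - nd h x₀ j = -h := by
      simp only [nd]; push_cast; ring
    have hb1 : |a + b - 2 * fm| ≤ C₂ * h ^ 2 / 2 := by
      have := hquad (nd h x₀ (j-1)) hm1 (nd h x₀ j) hm2
      rw [hd1] at this
      rw [hfm, hmid]
      calc |a + b - 2 * f ((nd h x₀ (j-1) + nd h x₀ j) / 2)| ≤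
          2 * C₂ * (-h / 2) ^ 2 := this
        _ = C₂ * h ^ 2 / 2 := by ring
    have habP : |a - c4| ≤ C₁ * (2 * h) := by
      have := hlip (nd h x₀ (j-1)) hm1 (nd h x₀ (j+1)) hm3
      have hd : nd h x₀ (j-1) - nd h x₀ (j+1) = -(2*h) := by
        simp only [nd]; push_cast; ring
      rw [hd] at this
      calc |a - c4| ≤ C₁ * |-(2*h)| := this
        _ = C₁ * (2 * h) := by rw [abs_neg, abs_of_pos (by linarith)]
    have habQ : |c1 - b| ≤ C₁ * (2 * h) := by
      have := hlip (nd h x₀ (j-2)) hm0 (nd h x₀ j) hm2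
      have hd : nd h x₀ (j-2) - nd h x₀ j = -(2*h) := by
        simp only [nd]; push_cast; ring
      rw [hd] at this
      calc |c1 - b| ≤ C₁ * |-(2*h)| := this
        _ = C₁ * (2 * h) := by rw [abs_neg, abs_of_pos (by linarith)]
    have hab : |a - b| ≤ C₁ * h := by
      have := hlip (nd h x₀ (j-1)) hm1 (nd h x₀ j) hm2
      rw [hd1] at this
      calc |a - b| ≤ C₁ * |-h| := this
        _ = C₁ * h := by rw [abs_neg, abs_of_pos hh]
    have hPle : P ≤ 4 * C₁ ^ 2 * h ^ 2 := by
      have : P = |a - c4| ^ 2 := by rw [sq_abs]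
      rw [this]
      calc |a - c4| ^ 2 ≤ (C₁ * (2*h)) ^ 2 :=
          pow_le_pow_left₀ (abs_nonneg _) habP 2
        _ = 4 * C₁ ^ 2 * h ^ 2 := by ring
    have hQle : Q ≤ 4 * C₁ ^ 2 * h ^ 2 := by
      have : Q = |c1 - b| ^ 2 := by rw [sq_abs]
      rw [this]
      calc |c1 - b| ^ 2 ≤ (C₁ * (2*h)) ^ 2 :=
          pow_le_pow_left₀ (abs_nonneg _) habQ 2
        _ = 4 * C₁ ^ 2 * h ^ 2 := by ring
    have hPQ : |P - Q| ≤ 8 * C₁ ^ 2 * h ^ 2 := by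
      rw [abs_sub_le_iff]
      constructor
      · have := sq_nonneg (c1 - b); rw [← hQ] at this; linarith
      · have := sq_nonneg (a - c4); rw [← hP] at this; linarith
    have hterm2 : |α * (P - Q) * (a - b) / (2 * D)| ≤ 2 * α * C₁ ^ 3 * h ^ 3 := by
      rw [abs_div]
      have hnum : |α * (P - Q) * (a - b)| ≤ α * (8 * C₁ ^ 2 * h ^ 2) * (C₁ * h) := by
        rw [abs_mul, abs_mul, abs_of_nonneg hα]
        have h1' : α * |P - Q| ≤ α * (8 * C₁ ^ 2 * h ^ 2) :=
          mul_le_mul_of_nonneg_left hPQ hα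
        exact mul_le_mul h1' hab (abs_nonneg _) (by positivity)
      have hden : (4:ℝ) ≤ |2 * D| := by
        rw [abs_of_pos (by linarith)]; linarith
      rw [div_le_iff₀ (by positivity : (0:ℝ) < |2 * D|)]
      nlinarith [hnum, hden,
        mul_nonneg (mul_nonneg (mul_nonneg (by norm_num : (0:ℝ) ≤ 2) hα)
          (pow_nonneg hC₁0 3)) (pow_nonneg hh.le 3)]
    rw [hid]
    calc |(a + b - 2 * fm) / 2 + α * (P - Q) * (a - b) / (2 * D)|
        ≤ |(a + b - 2 * fm) / 2| + |α * (P - Q) * (a - b) / (2 * D)| := abs_add_le _ _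
      _ ≤ C₂ * h ^ 2 / 2 / 2 + 2 * α * C₁ ^ 3 * h ^ 3 := by
          apply add_le_add _ hterm2
          rw [abs_div, abs_of_pos (by norm_num : (0:ℝ) < 2)]
          linarith
      _ ≤ (C₂ + 2 * α * C₁ ^ 3 + 1) * h ^ 2 := by
          have h3le : h ^ 3 ≤ h ^ 2 :=
            pow_le_pow_of_le_one hh.le hh1.le (by norm_num)
          have e2 : 2 * α * C₁ ^ 3 * h ^ 3 ≤ 2 * α * C₁ ^ 3 * h ^ 2 :=
            mul_le_mul_of_nonneg_left h3le (by positivity)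
          have e1 : C₂ * h ^ 2 / 2 / 2 ≤ C₂ * h ^ 2 := by
            have : 0 ≤ C₂ * h ^ 2 := by positivity
            linarith
          have e3 : (0:ℝ) ≤ h ^ 2 := by positivity
          have e4 : (C₂ + 2 * α * C₁ ^ 3 + 1) * h ^ 2 =
              C₂ * h ^ 2 + 2 * α * C₁ ^ 3 * h ^ 2 + h ^ 2 := by ring
          rw [e4]
          linarith
  · refine ⟨1, one_pos, 1, one_pos, ?_⟩
    intro h hh hh1 x₀ j hsub
    exfalso
    have hle : nd h x₀ (j-2) ≤ nd h x₀ (j+1) := by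
      simp only [nd]; push_cast; nlinarith
    have h1 := hsub ⟨le_refl _, hle⟩
    have h2 := hsub ⟨hle, le_refl _⟩
    have h3 : nd h x₀ (j+1) - nd h x₀ (j-2) = 3 * h := by
      simp only [nd]; push_cast; ring
    have : A < B := by
      have := h1.1; have := h1.2; have := h2.1; have := h2.2
      nlinarith
    exact hAB this
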